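/- arXiv:2510.11430 — 2 statements merged into one kernel-verified Lean document; each statement's English description precedes it below -/
import Mathlib

section
/- For each i ∈ ℕ and each real α_j with α_j + n/2 > 0, the function φ(y) = y^{α_j} M(−i; α_j + n/2; y²/4) solves the ODE φ'' + ((n−1)/y) φ' − (μ_j/y²) φ + (1/2)(φ − y φ') = −λ φ with eigenvalue λ = −(1 − α_j)/2 + i, where μ_j = α_j² + (n−2)α_j. -/
/-- Kummer's confluent hypergeometric function
`M(a;b;ξ) = 1 + Σ_{k≥1} (a^{(k)}/b^{(k)}) ξᵏ/k!`. -/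
noncomputable def kummerM (a b ξ : ℝ) : ℝ :=
  ∑' k : ℕ, ((ascPochhammer ℝ k).eval a / (ascPochhammer ℝ k).eval b) * ξ ^ k / (k.factorial : ℝ)

/-- Series coefficients of `kummerM`. -/
noncomputable def cCoef (i : ℕ) (b : ℝ) (k : ℕ) : ℝ :=
  (ascPochhammer ℝ k).eval (-(i : ℝ)) / (ascPochhammer ℝ k).eval b / (k.factorial : ℝ)

lemma asc_neg_nat_eq_zero (i k : ℕ) (h : i < k) :
    (ascPochhammer ℝ k).eval (-(i : ℝ)) = 0 := by
  induction k with
  | zero => omega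
  | succ m ih =>
    rw [ascPochhammer_succ_eval]
    rcases Nat.lt_or_ge i m with hm | hm
    · rw [ih hm, zero_mul]
    · have : i = m := by omega
      subst this
      simp

lemma cCoef_eq_zero (i : ℕ) (b : ℝ) (k : ℕ) (h : i < k) : cCoef i b k = 0 := by
  rw [cCoef, asc_neg_nat_eq_zero i k h, zero_div, zero_div]

lemma kummerM_eq_sum (i : ℕ) (b ξ : ℝ) :
    kummerM (-(i : ℝ)) b ξ = ∑ k ∈ Finset.range (i + 1), cCoef i b k * ξ ^ k := by
  rw [kummerM, tsum_eq_sum (s := Finset.range (i + 1)) ?_]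
  · refine Finset.sum_congr rfl fun k _ => ?_
    rw [cCoef]; ring
  · intro k hk
    rw [asc_neg_nat_eq_zero i k (by simpa using hk), zero_div, zero_mul, zero_div]

lemma cCoef_rec (i : ℕ) (b : ℝ) (hb : 0 < b) (k : ℕ) :
    cCoef i b (k + 1) * (((k : ℝ) + 1) * (b + k)) = cCoef i b k * ((k : ℝ) - i) := by
  have hP : (ascPochhammer ℝ k).eval b ≠ 0 := (ascPochhammer_pos k b hb).ne'
  have hbk : b + (k : ℝ) ≠ 0 := by positivity
  have hf : ((k.factorial : ℝ)) ≠ 0 := Nat.cast_ne_zero.2 k.factorial_ne_zero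
  have hk1 : ((k : ℝ) + 1) ≠ 0 := by positivity
  rw [cCoef, cCoef, ascPochhammer_succ_eval, ascPochhammer_succ_eval, Nat.factorial_succ]
  push_cast
  field_simp
  ring

/-- For each `i ∈ ℕ` and real `αj` with `αj + n/2 > 0`, the function
`φ(y) = y^{αj} M(−i; αj + n/2; y²/4)` solves
`φ'' + ((n−1)/y)φ' − (μj/y²)φ + (1/2)(φ − yφ') = −λφ` with
`λ = −(1−αj)/2 + i` and `μj = αj² + (n−2)αj`. -/
theorem stmt_4 (n : ℕ) (hn : 2 ≤ n) (i : ℕ) (αj : ℝ) (hα : αj + (n : ℝ) / 2 > 0) :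
    ∀ φ : ℝ → ℝ, (φ = fun y : ℝ => y ^ αj * kummerM (-(i : ℝ)) (αj + (n : ℝ) / 2) (y ^ 2 / 4)) →
      ∀ μj lam : ℝ, μj = αj ^ 2 + ((n : ℝ) - 2) * αj → lam = -(1 - αj) / 2 + (i : ℝ) →
        ∀ y : ℝ, 0 < y →
          deriv (deriv φ) y + (((n : ℝ) - 1) / y) * deriv φ y - (μj / y ^ 2) * φ y
            + (1 / 2) * (φ y - y * deriv φ y) = -lam * φ y := by
  intro φ hφ μj lam hμ hlam y hy
  set b : ℝ := αj + (n : ℝ) / 2 with hb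
  have hbpos : 0 < b := hα
  set d : ℕ → ℝ := fun k => cCoef i b k / 4 ^ k with hd
  set p : ℕ → ℝ := fun k => αj + 2 * k with hp
  set F : ℝ → ℝ := fun z => ∑ k ∈ Finset.range (i + 1), d k * z ^ (p k) with hF
  set G : ℝ → ℝ := fun z => ∑ k ∈ Finset.range (i + 1), d k * (p k * z ^ (p k - 1)) with hG
  -- φ agrees with F on (0, ∞)
  have hφF : ∀ z : ℝ, 0 < z → φ z = F z := by
    intro z hz
    rw [hφ]
    simp only [hF]
    rw [kummerM_eq_sum, Finset.mul_sum]
    refine Finset.sum_congr rfl fun k _ => ?_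
    have h1 : (z ^ 2 / 4) ^ k = z ^ (2 * k) / 4 ^ k := by
      rw [div_pow, ← pow_mul]
    rw [h1]
    have h2 : z ^ αj * z ^ (2 * k : ℕ) = z ^ (p k) := by
      rw [← Real.rpow_natCast z (2 * k), ← Real.rpow_add hz, hp]
      push_cast
      ring_nf
    rw [hd]
    field_simp
    rw [← h2]
    ring
  have hmem : ∀ z : ℝ, 0 < z → Set.Ioi (0 : ℝ) ∈ nhds z := fun z hz =>
    IsOpen.mem_nhds isOpen_Ioi hz
  -- derivatives of F
  have hFd : ∀ z : ℝ, 0 < z → HasDerivAt F (G z) z := by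
    intro z hz
    simp only [hF, hG]
    apply HasDerivAt.fun_sum
    intro k _
    exact (Real.hasDerivAt_rpow_const (Or.inl hz.ne')).const_mul (d k)
  have hGd : HasDerivAt G
      (∑ k ∈ Finset.range (i + 1), d k * (p k * ((p k - 1) * y ^ (p k - 2))) ) y := by
    simp only [hG]
    apply HasDerivAt.fun_sum
    intro k _
    have h1 : HasDerivAt (fun z : ℝ => z ^ (p k - 1)) ((p k - 1) * y ^ (p k - 1 - 1)) y :=
      Real.hasDerivAt_rpow_const (Or.inl hy.ne')
    have h2 := (h1.const_mul (p k)).const_mul (d k)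
    convert h2 using 2
    case e'_9 => ring_nf
    case e'_4 => rfl
  -- deriv φ = G on (0,∞)
  have hderiv1 : ∀ z : ℝ, 0 < z → deriv φ z = G z := by
    intro z hz
    have heq : φ =ᶠ[nhds z] F :=
      Filter.eventuallyEq_of_mem (hmem z hz) fun w hw => hφF w hw
    rw [heq.deriv_eq, (hFd z hz).deriv]
  have hderiv2 : deriv (deriv φ) y
      = ∑ k ∈ Finset.range (i + 1), d k * (p k * ((p k - 1) * y ^ (p k - 2))) := by
    have heq : deriv φ =ᶠ[nhds y] G :=
      Filter.eventuallyEq_of_mem (hmem y hy) fun w hw => hderiv1 w hw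
    rw [heq.deriv_eq, hGd.deriv]
  rw [hderiv2, hderiv1 y hy, hφF y hy]
  simp only [hF, hG]
  set t : ℕ → ℝ := fun k => y ^ (p k - 2) with ht
  have htt : ∀ k : ℕ, t k * y ^ 2 = t (k + 1) := by
    intro k
    rw [ht]
    simp only
    rw [← Real.rpow_two, ← Real.rpow_add hy, hp]
    push_cast
    ring_nf
  have hpow2 : ∀ k : ℕ, y ^ (p k) = t k * y ^ 2 := by
    intro k
    rw [ht, show p k = (p k - 2) + 2 by ring, Real.rpow_add hy, Real.rpow_two]
  have hpow1 : ∀ k : ℕ, y ^ (p k - 1) = t k * y := by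
    intro k
    rw [ht, show p k - 1 = (p k - 2) + 1 by ring, Real.rpow_add hy, Real.rpow_one]
  have hpow0 : ∀ k : ℕ, y ^ (p k - 2) = t k := fun k => rfl
  clear_value b d p F G t
  simp only [hpow2, hpow1, hpow0]
  rw [← sub_eq_zero]
  have main : ∑ k ∈ Finset.range (i + 1),
      (d k * (4 * (k : ℝ) * (b + k - 1)) * t k + d k * ((i : ℝ) - k) * t (k + 1)) = 0 := by
    rw [Finset.sum_add_distrib, Finset.sum_range_succ', Finset.sum_range_succ]
    have h0 : d 0 * (4 * ((0 : ℕ) : ℝ) * (b + ((0 : ℕ) : ℝ) - 1)) * t 0 = 0 := by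
      norm_num
    have hi : d i * ((i : ℝ) - i) * t (i + 1) = 0 := by
      rw [sub_self, mul_zero, zero_mul]
    rw [h0, hi, add_zero, add_zero, ← Finset.sum_add_distrib]
    apply Finset.sum_eq_zero
    intro k hk
    have hcoef : d (k + 1) * (4 * (((k : ℝ) + 1)) * (b + ((k : ℝ) + 1) - 1))
        + d k * ((i : ℝ) - k) = 0 := by
      have h := cCoef_rec i b hbpos k
      simp only [hd]
      have h4' : (4 : ℝ) ^ k ≠ 0 := by positivity
      rw [pow_succ]
      linear_combination h / 4 ^ k
    push_cast
    linear_combination hcoef * t (k + 1)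
  simp only [Finset.mul_sum, mul_sub, ← Finset.sum_sub_distrib, ← Finset.sum_add_distrib]
  refine Eq.trans (Finset.sum_congr rfl fun k hk => ?_) main
  rw [← htt k]
  simp only [hμ, hlam, hp, hb, hd]
  have hyne : y ≠ 0 := hy.ne'
  field_simp
  ring
end

section
/- There exists a constant C'(n) depending only on n such that for every smooth compactly supported function u on (0,∞), ∫₀^∞ (|u'(y)|² − ((n−2)²/(4y²)) u(y)²) y^{n−1} e^{−y²/4} dy ≥ −C' ∫₀^∞ u(y)² y^{n−1} e^{−y²/4} dy. -/
open MeasureTheory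

set_option maxHeartbeats 1000000 in
/-- Hardy-type inequality with Gaussian weight on the half-line: there is a
constant `C'(n)` depending only on `n` such that for every smooth compactly
supported function `u` on `(0,∞)`,
`∫₀^∞ (|u'|² − ((n−2)²/(4y²)) u²) y^{n−1} e^{−y²/4} dy ≥ −C' ∫₀^∞ u² y^{n−1} e^{−y²/4} dy`. -/
theorem stmt_8 (n : ℕ) (hn : 3 ≤ n) :
    ∃ C' : ℝ, ∀ u : ℝ → ℝ, ContDiff ℝ (⊤ : ℕ∞) u → HasCompactSupport u →
      tsupport u ⊆ Set.Ioi (0 : ℝ) →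
      (∫ y in Set.Ioi (0 : ℝ),
          ((deriv u y) ^ 2 - (((n : ℝ) - 2) ^ 2 / (4 * y ^ 2)) * (u y) ^ 2)
            * y ^ (n - 1) * Real.exp (-y ^ 2 / 4))
        ≥ -C' * ∫ y in Set.Ioi (0 : ℝ), (u y) ^ 2 * y ^ (n - 1) * Real.exp (-y ^ 2 / 4) := by
  obtain ⟨m, rfl⟩ : ∃ m, n = m + 3 := ⟨n - 3, by omega⟩
  set c : ℝ := (m : ℝ) + 1 with hc
  refine ⟨c / 4, fun u hu hcs hsupp => ?_⟩
  have hcast : ((m + 3 : ℕ) : ℝ) - 2 = c := by push_cast [hc]; ring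
  set e : ℝ → ℝ := fun y => Real.exp (-y ^ 2 / 4) with he
  have hconte : Continuous e := by fun_prop
  have hcontu : Continuous u := hu.continuous
  have hcontu' : Continuous (deriv u) := hu.continuous_deriv (by simp)
  have hdu : ∀ y, HasDerivAt u (deriv u y) y :=
    fun y => (hu.differentiable (by simp) y).hasDerivAt
  -- derivative of u vanishes outside tsupport
  have hderiv0 : ∀ x ∉ tsupport u, deriv u x = 0 := by
    intro x hx
    have h : u =ᶠ[nhds x] (fun _ => (0:ℝ)) := by
      filter_upwards [(isClosed_tsupport u).isOpen_compl.mem_nhds hx] with z hz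
      exact image_eq_zero_of_notMem_tsupport hz
    rw [h.deriv_eq]; simp
  have hu0 : ∀ x ∉ tsupport u, u x = 0 := fun x hx => image_eq_zero_of_notMem_tsupport hx
  -- auxiliary functions
  set F : ℝ → ℝ := fun y => c / 2 * (u y) ^ 2 * y ^ (m + 1) * e y with hF
  set F' : ℝ → ℝ := fun y =>
    c * u y * deriv u y * y ^ (m + 1) * e y + c ^ 2 / 2 * (u y) ^ 2 * y ^ m * e y
      - c / 4 * (u y) ^ 2 * y ^ (m + 2) * e y with hF'
  set S : ℝ → ℝ := fun y => (deriv u y * y + c / 2 * u y) ^ 2 * y ^ m * e y with hS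
  set G : ℝ → ℝ := fun y => (u y) ^ 2 * y ^ (m + 2) * e y with hG
  have hde : ∀ y : ℝ, HasDerivAt e (-(y / 2) * e y) y := by
    intro y
    have h1 : HasDerivAt (fun y : ℝ => -y ^ 2 / 4) (-(y / 2)) y := by
      have := ((hasDerivAt_pow 2 y).neg).div_const 4
      exact this.congr_deriv (by push_cast; ring)
    have := h1.exp
    exact this.congr_deriv (by rw [he]; ring)
  have hdF : ∀ y, HasDerivAt F (F' y) y := by
    intro y
    have h1 : HasDerivAt (fun y => (u y) ^ 2) (2 * u y * deriv u y) y := by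
      have := (hdu y).pow 2
      exact this.congr_deriv (by push_cast; ring)
    have h2 : HasDerivAt (fun y : ℝ => y ^ (m + 1)) ((m + 1 : ℝ) * y ^ m) y := by
      have := hasDerivAt_pow (m + 1) y
      exact this.congr_deriv (by simp)
    have := (((h1.mul h2).mul (hde y)).const_mul (c / 2))
    refine (this.congr_deriv ?_).congr_of_eventuallyEq (Filter.Eventually.of_forall fun z => ?_)
    · rw [hF', hc]; push_cast [Pi.mul_apply]; ring
    · rw [hF]; simp only [Pi.mul_apply]; ring
  -- compact support and integrability
  have hcsK : IsCompact (tsupport u) := hcs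
  have hcsF : HasCompactSupport F := HasCompactSupport.intro hcsK
    (fun x hx => by simp [hF, hu0 x hx])
  have hcsF' : HasCompactSupport F' := HasCompactSupport.intro hcsK
    (fun x hx => by simp [hF', hu0 x hx, hderiv0 x hx])
  have hcsS : HasCompactSupport S := HasCompactSupport.intro hcsK
    (fun x hx => by simp [hS, hu0 x hx, hderiv0 x hx])
  have hcsG : HasCompactSupport G := HasCompactSupport.intro hcsK
    (fun x hx => by simp [hG, hu0 x hx])
  have hcontF : Continuous F := by fun_prop
  have hcontF' : Continuous F' := by fun_prop
  have hcontS : Continuous S := by fun_prop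
  have hcontG : Continuous G := by fun_prop
  have hiF : Integrable F := hcontF.integrable_of_hasCompactSupport hcsF
  have hiF' : Integrable F' := hcontF'.integrable_of_hasCompactSupport hcsF'
  have hiS : IntegrableOn S (Set.Ioi (0:ℝ)) := (hcontS.integrable_of_hasCompactSupport hcsS).integrableOn
  have hiG : IntegrableOn G (Set.Ioi (0:ℝ)) := (hcontG.integrable_of_hasCompactSupport hcsG).integrableOn
  have hiF'on : IntegrableOn F' (Set.Ioi (0:ℝ)) := hiF'.integrableOn
  -- integral of F' over Ioi 0 is zero
  have hintF' : ∫ y in Set.Ioi (0:ℝ), F' y = 0 := by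
    rw [setIntegral_eq_integral_of_forall_compl_eq_zero]
    · exact integral_eq_zero_of_hasDerivAt_of_integrable hdF hiF' hiF
    · intro x hx
      have hx' : x ∉ tsupport u := fun h => hx (hsupp h)
      simp [hF', hu0 x hx', hderiv0 x hx']
  -- pointwise identity on Ioi 0
  have hkey : ∫ y in Set.Ioi (0:ℝ),
      ((deriv u y) ^ 2 - (((m + 3 : ℕ) : ℝ) - 2) ^ 2 / (4 * y ^ 2) * (u y) ^ 2)
        * y ^ (m + 3 - 1) * Real.exp (-y ^ 2 / 4)
      = ∫ y in Set.Ioi (0:ℝ), (S y - F' y - c / 4 * G y) := by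
    refine setIntegral_congr_fun measurableSet_Ioi (fun y hy => ?_)
    have hy0 : (y:ℝ) ≠ 0 := ne_of_gt hy
    rw [hcast]
    show ((deriv u y) ^ 2 - c ^ 2 / (4 * y ^ 2) * (u y) ^ 2) * y ^ (m + 2) * e y
      = S y - F' y - c / 4 * G y
    rw [hS, hF', hG]
    field_simp
    ring
  have hsplit : ∫ y in Set.Ioi (0:ℝ), (S y - F' y - c / 4 * G y)
      = (∫ y in Set.Ioi (0:ℝ), S y) - (∫ y in Set.Ioi (0:ℝ), F' y)
        - c / 4 * ∫ y in Set.Ioi (0:ℝ), G y := by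
    have hiSF : IntegrableOn (fun y => S y - F' y) (Set.Ioi (0:ℝ)) :=
      ((hcontS.sub hcontF').integrable_of_hasCompactSupport
        (HasCompactSupport.intro hcsK
          (fun x hx => by simp [hS, hF', hu0 x hx, hderiv0 x hx]))).integrableOn
    rw [integral_sub hiSF (hiG.const_mul _), integral_sub hiS hiF'on, integral_const_mul]
  rw [hkey, hsplit, hintF']
  have hSnn : 0 ≤ ∫ y in Set.Ioi (0:ℝ), S y := by
    refine setIntegral_nonneg measurableSet_Ioi (fun y hy => ?_)
    rw [hS]
    have : (0:ℝ) < y := hy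
    positivity
  have hGeq : (∫ y in Set.Ioi (0:ℝ), (u y) ^ 2 * y ^ (m + 3 - 1) * Real.exp (-y ^ 2 / 4))
      = ∫ y in Set.Ioi (0:ℝ), G y := rfl
  rw [hGeq]
  nlinarith [hSnn]
end
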